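/- For every prime p ≥ 5 and every positive integer J divisible by p², we have pH_J ≡ H_{J/p} modulo p⁵ℤ_p, i.e. v_p(pH_J − H_{J/p}) ≥ 5. -/

import Mathlib

/-!
Let `S = ∑ 1/k` over `1 ≤ k ≤ J` with `p ∤ k`. The multiples of `p` contribute `H_{J/p} / p` to
`H_J`, so `p H_J - H_{J/p} = p S`. Pairing `k` with `J - k` gives
`2 S = J² ∑ 1/(k² (J - k)) - J ∑ 1/k²`. Modulo `p²`, `∑ 1/k²` is `J/p²` copies of `∑ u⁻²` over the
units `u` of `ℤ/p²`, and that sum vanishes: the substitution `u ↦ 2u` multiplies it by `4`, and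
`4 - 1 = 3` is a unit. Hence `v_p(S) ≥ 4` once `p² ∣ J`.
-/

/-- The `n`-th harmonic number `H_n = ∑_{i=1}^n 1/i`, as a rational number. -/
def H (n : ℕ) : ℚ := ∑ i ∈ Finset.range n, (1 : ℚ) / (i + 1)

open Finset

theorem sum_units_pow_eq_zero {R : Type*} [CommRing R] [Fintype Rˣ] (a : Rˣ) (k : ℕ)
    (ha : IsUnit ((a : R) ^ k - 1)) : ∑ u : Rˣ, (u : R) ^ k = 0 := by
  have hscale : ∑ u : Rˣ, (u : R) ^ k = (a : R) ^ k * ∑ u : Rˣ, (u : R) ^ k := by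
    rw [mul_sum, ← Fintype.sum_equiv (Equiv.mulLeft a) (fun u : Rˣ => ((a * u : Rˣ) : R) ^ k)
      (fun u : Rˣ => (u : R) ^ k) (fun _ => rfl)]
    simp [mul_pow]
  refine ha.mul_right_eq_zero.mp ?_
  linear_combination -hscale

theorem Fintype.sum_ite_isUnit {R M : Type*} [Monoid R] [Fintype R] [Fintype Rˣ]
    [DecidablePred (IsUnit : R → Prop)] [AddCommMonoid M] (g : R → M) :
    ∑ x, (if IsUnit x then g x else 0) = ∑ u : Rˣ, g u := by
  rw [← sum_filter]
  refine (sum_nbij' (fun u : Rˣ => (u : R)) (fun x => if h : IsUnit x then h.unit else 1)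
    ?_ ?_ ?_ ?_ ?_).symm <;> simp +contextual

namespace ZMod

theorem sum_range_natCast {M : Type*} [AddCommMonoid M] (n : ℕ) [NeZero n]
    (f : ZMod n → M) : ∑ i ∈ range n, f i = ∑ x, f x :=
  sum_nbij' (fun i => (i : ZMod n)) val (by simp) (by simp [val_lt])
    (fun i hi => val_cast_of_lt (mem_range.mp hi)) (fun x _ => natCast_zmod_val x)
    (fun _ _ => rfl)

theorem sum_range_mul_natCast {M : Type*} [AddCommMonoid M] (n m : ℕ) [NeZero n]
    (f : ZMod n → M) : ∑ i ∈ range (n * m), f i = m • ∑ x, f x := by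
  induction m with
  | zero => simp
  | succ m ih =>
    rw [mul_add_one, sum_range_add, ih, succ_nsmul, ← sum_range_natCast]
    congr 1
    refine sum_congr rfl fun i _ => ?_
    simp

theorem sum_Icc_one_mul_natCast {M : Type*} [AddCommMonoid M] (n m : ℕ) [NeZero n]
    (f : ZMod n → M) : ∑ k ∈ Icc 1 (n * m), f k = m • ∑ x, f x := by
  rw [← Ico_add_one_right_eq_Icc, ← zero_add 1, ← sum_Ico_add' (fun k : ℕ => f k),
    ← range_eq_Ico]
  rw [← Fintype.sum_equiv (Equiv.addRight 1) (fun x => f (x + 1)) f (fun _ => rfl)]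
  simpa using sum_range_mul_natCast n m (fun x => f (x + 1))

theorem sum_units_sq_eq_zero {n : ℕ} [NeZero n] (h : Nat.Coprime 6 n) :
    ∑ u : (ZMod n)ˣ, (u : ZMod n) ^ 2 = 0 := by
  refine sum_units_pow_eq_zero
    (unitOfCoprime 2 (Nat.Coprime.coprime_dvd_left (by norm_num) h)) 2 ?_
  have h3 := (isUnit_iff_coprime 3 n).mpr (Nat.Coprime.coprime_dvd_left (by norm_num) h)
  norm_num [unitOfCoprime]
  exact_mod_cast h3

theorem sum_Icc_filter_isUnit_inv_sq {n : ℕ} [NeZero n] (h : Nat.Coprime 6 n) (m : ℕ) :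
    ∑ k ∈ (Icc 1 (n * m)).filter (fun k : ℕ => IsUnit (k : ZMod n)), ((k : ZMod n)⁻¹) ^ 2 = 0 := by
  classical
  rw [sum_filter, sum_Icc_one_mul_natCast n m (fun x => if IsUnit x then (x⁻¹) ^ 2 else 0),
    Fintype.sum_ite_isUnit]
  simp only [inv_coe_unit]
  rw [Fintype.sum_equiv (Equiv.inv (ZMod n)ˣ) (fun u => ((u⁻¹ : (ZMod n)ˣ) : ZMod n) ^ 2)
    (fun u => (u : ZMod n) ^ 2) (fun _ => rfl), sum_units_sq_eq_zero h, smul_zero]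

end ZMod

theorem H_eq_harmonic : H = harmonic := by
  funext n
  simp [H, harmonic]

theorem harmonic_eq_inv_mul_harmonic_div_add {p J : ℕ} (hp : 0 < p) (hpJ : p ∣ J) :
    harmonic J = (p : ℚ)⁻¹ * harmonic (J / p) + ∑ k ∈ (Icc 1 J).filter (¬ p ∣ ·), (k : ℚ)⁻¹ := by
  obtain ⟨t, rfl⟩ := hpJ
  have hmultiples : ∑ k ∈ (Icc 1 (p * t)).filter (p ∣ ·), (k : ℚ)⁻¹ =
      ∑ j ∈ Icc 1 t, ((p * j : ℕ) : ℚ)⁻¹ := by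
    refine (sum_nbij' (p * ·) (· / p) ?_ ?_ ?_ ?_ ?_).symm
    · intro j hj
      simp only [mem_filter, mem_Icc] at hj ⊢
      exact ⟨⟨Nat.mul_pos hp hj.1, Nat.mul_le_mul_left p hj.2⟩, dvd_mul_right p j⟩
    · rintro k hk
      simp only [mem_filter, mem_Icc] at hk ⊢
      obtain ⟨⟨hk1, hkt⟩, j, rfl⟩ := hk
      rw [Nat.mul_div_cancel_left j hp]
      exact ⟨Nat.pos_of_mul_pos_left hk1, Nat.le_of_mul_le_mul_left hkt hp⟩
    · intro j _
      exact Nat.mul_div_cancel_left j hp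
    · rintro k hk
      exact Nat.mul_div_cancel' (mem_filter.mp hk).2
    · intro j _
      rfl
  rw [harmonic_eq_sum_Icc, harmonic_eq_sum_Icc, Nat.mul_div_cancel_left t hp, mul_sum,
    ← sum_filter_add_sum_filter_not _ (p ∣ ·), hmultiples]
  simp [mul_comm]

theorem sub_mem_Icc_filter_not_dvd {p J k : ℕ} (hpJ : p ∣ J)
    (hk : k ∈ (Icc 1 J).filter (¬ p ∣ ·)) : J - k ∈ (Icc 1 J).filter (¬ p ∣ ·) := by
  simp only [mem_filter, mem_Icc] at hk ⊢
  obtain ⟨⟨hk1, hkJ⟩, hpk⟩ := hk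
  have hkJ' : k < J := lt_of_le_of_ne hkJ (by rintro rfl; exact hpk hpJ)
  refine ⟨⟨by omega, by omega⟩, fun h => hpk ?_⟩
  simpa [Nat.sub_sub_self hkJ] using Nat.dvd_sub hpJ h

theorem two_mul_sum_inv_filter_not_dvd {p J : ℕ} (hpJ : p ∣ J) :
    2 * ∑ k ∈ (Icc 1 J).filter (¬ p ∣ ·), (k : ℚ)⁻¹ =
      J ^ 2 * ∑ k ∈ (Icc 1 J).filter (¬ p ∣ ·), (k : ℚ)⁻¹ ^ 2 * ((J - k : ℕ) : ℚ)⁻¹ -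
        J * ∑ k ∈ (Icc 1 J).filter (¬ p ∣ ·), (k : ℚ)⁻¹ ^ 2 := by
  set s := (Icc 1 J).filter (¬ p ∣ ·)
  have hinvol : ∀ k ∈ s, J - (J - k) = k := fun k hk =>
    Nat.sub_sub_self (mem_Icc.mp (mem_filter.mp hk).1).2
  have hreflect : ∑ k ∈ s, (k : ℚ)⁻¹ = ∑ k ∈ s, ((J - k : ℕ) : ℚ)⁻¹ :=
    sum_nbij' (J - ·) (J - ·) (fun _ => sub_mem_Icc_filter_not_dvd hpJ)
      (fun _ => sub_mem_Icc_filter_not_dvd hpJ) hinvol hinvol fun k hk => by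
        simp only [hinvol k hk]
  calc 2 * ∑ k ∈ s, (k : ℚ)⁻¹ = ∑ k ∈ s, ((k : ℚ)⁻¹ + ((J - k : ℕ) : ℚ)⁻¹) := by
        rw [two_mul, sum_add_distrib, ← hreflect]
    _ = ∑ k ∈ s, (J ^ 2 * ((k : ℚ)⁻¹ ^ 2 * ((J - k : ℕ) : ℚ)⁻¹) - J * (k : ℚ)⁻¹ ^ 2) := by
        refine sum_congr rfl fun k hk => ?_
        have hk1 := (mem_Icc.mp (mem_filter.mp hk).1).1
        have hJk := (mem_Icc.mp (mem_filter.mp (sub_mem_Icc_filter_not_dvd hpJ hk)).1).1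
        have hk0 : (k : ℚ) ≠ 0 := by positivity
        have hJk0 : ((J - k : ℕ) : ℚ) ≠ 0 := by positivity
        rw [Nat.cast_sub (by omega)] at hJk0 ⊢
        field_simp
        ring
    _ = _ := by rw [sum_sub_distrib, mul_sum, mul_sum]

namespace padicNorm

variable {p : ℕ} [hp : Fact p.Prime]

theorem natCast_inv_of_not_dvd {k : ℕ} (hk : ¬ p ∣ k) : padicNorm p (k : ℚ)⁻¹ = 1 := by
  rw [← one_div, padicNorm.div, (nat_eq_one_iff k).mpr hk, padicNorm.one, div_one]

theorem inv_sq_sub_sq_le {k : ℕ} {c : ℤ} {n : ℕ} (hk : ¬ p ∣ k) (hc : (p : ℤ) ^ n ∣ k * c - 1) :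
    padicNorm p ((k : ℚ)⁻¹ ^ 2 - c ^ 2) ≤ (p : ℚ) ^ (-n : ℤ) := by
  have hk0 : (k : ℚ) ≠ 0 := by rintro h; simp_all
  have hdvd : ((p ^ n : ℕ) : ℤ) ∣ 1 - (k * c) ^ 2 := by
    push_cast
    exact (dvd_neg.mpr hc).trans ⟨k * c + 1, by ring⟩
  have hfac : (k : ℚ)⁻¹ ^ 2 - c ^ 2 = ((1 - (k * c) ^ 2 : ℤ) : ℚ) * ((k : ℚ)⁻¹ * (k : ℚ)⁻¹) := by
    push_cast; field_simp
  rw [hfac, padicNorm.mul, padicNorm.mul, natCast_inv_of_not_dvd hk, mul_one, mul_one]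
  exact dvd_iff_norm_le.mp hdvd

theorem le_padicValRat_of_le {q : ℚ} (hq : q ≠ 0) {n : ℤ} (h : padicNorm p q ≤ (p : ℚ) ^ (-n)) :
    n ≤ padicValRat p q := by
  rw [padicNorm.eq_zpow_of_nonzero hq,
    zpow_le_zpow_iff_right₀ (by exact_mod_cast hp.out.one_lt)] at h
  exact neg_le_neg_iff.mp h

theorem natCast_le_of_pow_dvd {n J : ℕ} (hJ : p ^ n ∣ J) :
    padicNorm p J ≤ (p : ℚ) ^ (-n : ℤ) := by
  exact_mod_cast dvd_iff_norm_le.mp (Int.natCast_dvd_natCast.mpr hJ)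

theorem sum_inv_sq_filter_not_dvd_le (hp5 : 5 ≤ p) {J : ℕ} (hJ : p ^ 2 ∣ J) :
    padicNorm p (∑ k ∈ (Icc 1 J).filter (¬ p ∣ ·), (k : ℚ)⁻¹ ^ 2) ≤ (p : ℚ) ^ (-2 : ℤ) := by
  obtain ⟨m, rfl⟩ := hJ
  set s := (Icc 1 (p ^ 2 * m)).filter (¬ p ∣ ·)
  have hunit : ∀ k : ℕ, ¬ p ∣ k ↔ IsUnit (k : ZMod (p ^ 2)) := fun k => by
    rw [ZMod.isUnit_iff_coprime, Nat.coprime_pow_right_iff two_pos, Nat.coprime_comm,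
      hp.out.coprime_iff_not_dvd]
  have hcop6 : Nat.Coprime 6 (p ^ 2) := by
    refine (Nat.Coprime.symm ((hp.out.coprime_iff_not_dvd).mpr fun h => ?_)).pow_right 2
    rcases (Nat.Prime.dvd_mul hp.out).mp (show p ∣ 2 * 3 from h) with h | h <;>
      have := Nat.le_of_dvd (by norm_num) h <;> omega
  let c : ℕ → ℤ := fun k => ((k : ZMod (p ^ 2))⁻¹).val
  have hc : ∀ k, (c k : ZMod (p ^ 2)) = (k : ZMod (p ^ 2))⁻¹ := fun k => by simp [c]
  have hinv : ∀ k ∈ s, (p : ℤ) ^ 2 ∣ k * c k - 1 := fun k hk => by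
    have hk : IsUnit (k : ZMod (p ^ 2)) := (hunit k).mp (mem_filter.mp hk).2
    have := (ZMod.intCast_zmod_eq_zero_iff_dvd (k * c k - 1) (p ^ 2)).mp
      (by push_cast; rw [hc, ZMod.mul_inv_of_unit _ hk, sub_self])
    exact_mod_cast this
  have hsum : ((p ^ 2 : ℕ) : ℤ) ∣ ∑ k ∈ s, c k ^ 2 := by
    rw [← ZMod.intCast_zmod_eq_zero_iff_dvd]
    push_cast
    simp only [hc, s, filter_congr fun k _ => hunit k]
    exact ZMod.sum_Icc_filter_isUnit_inv_sq hcop6 m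
  have hsplit : ∑ k ∈ s, (k : ℚ)⁻¹ ^ 2 =
      ∑ k ∈ s, ((k : ℚ)⁻¹ ^ 2 - (c k : ℚ) ^ 2) + ((∑ k ∈ s, c k ^ 2 : ℤ) : ℚ) := by
    push_cast
    rw [← sum_add_distrib]
    simp
  rw [hsplit]
  refine padicNorm.nonarchimedean.trans (max_le ?_ (dvd_iff_norm_le.mp hsum))
  exact sum_le' (fun k hk => inv_sq_sub_sq_le (mem_filter.mp hk).2 (hinv k hk)) (by positivity)

theorem sum_inv_filter_not_dvd_le (hp5 : 5 ≤ p) {J : ℕ} (hJ : p ^ 2 ∣ J) :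
    padicNorm p (∑ k ∈ (Icc 1 J).filter (¬ p ∣ ·), (k : ℚ)⁻¹) ≤ (p : ℚ) ^ (-4 : ℤ) := by
  set s := (Icc 1 J).filter (¬ p ∣ ·)
  have hpJ : p ∣ J := (dvd_pow_self p two_ne_zero).trans hJ
  have h2 : padicNorm p 2 = 1 := by
    refine (nat_eq_one_iff 2).mpr fun h => ?_
    have := Nat.le_of_dvd (by norm_num) h
    omega
  have hV : padicNorm p (∑ k ∈ s, (k : ℚ)⁻¹ ^ 2 * ((J - k : ℕ) : ℚ)⁻¹) ≤ 1 := by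
    refine sum_le' (fun k hk => ?_) zero_le_one
    rw [padicNorm.mul, IsAbsoluteValue.abv_pow (padicNorm p),
      natCast_inv_of_not_dvd (mem_filter.mp hk).2,
      natCast_inv_of_not_dvd (mem_filter.mp (sub_mem_Icc_filter_not_dvd hpJ hk)).2]
    norm_num
  have hJnorm : padicNorm p J ≤ (p : ℚ) ^ (-2 : ℤ) := natCast_le_of_pow_dvd hJ
  have hp0 : (0 : ℚ) ≤ (p : ℚ) ^ (-2 : ℤ) := by positivity
  calc padicNorm p (∑ k ∈ s, (k : ℚ)⁻¹) = padicNorm p (2 * ∑ k ∈ s, (k : ℚ)⁻¹) := by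
        rw [padicNorm.mul, h2, one_mul]
    _ ≤ max (padicNorm p (J ^ 2 * ∑ k ∈ s, (k : ℚ)⁻¹ ^ 2 * ((J - k : ℕ) : ℚ)⁻¹))
          (padicNorm p (J * ∑ k ∈ s, (k : ℚ)⁻¹ ^ 2)) := by
        rw [two_mul_sum_inv_filter_not_dvd hpJ]
        exact padicNorm.sub
    _ ≤ (p : ℚ) ^ (-4 : ℤ) := by
        rw [padicNorm.mul, padicNorm.mul, IsAbsoluteValue.abv_pow (padicNorm p)]
        have hp4 : (p : ℚ) ^ (-4 : ℤ) = (p : ℚ) ^ (-2 : ℤ) * (p : ℚ) ^ (-2 : ℤ) := by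
          rw [← zpow_add₀ (by exact_mod_cast hp.out.ne_zero)]; norm_num
        rw [hp4]
        refine max_le ?_ ?_
        · rw [← mul_one ((p : ℚ) ^ (-2 : ℤ) * _), ← sq]
          exact mul_le_mul (pow_le_pow_left₀ (padicNorm.nonneg _) hJnorm 2) hV
            (padicNorm.nonneg _) (by positivity)
        · exact mul_le_mul hJnorm (sum_inv_sq_filter_not_dvd_le hp5 hJ) (padicNorm.nonneg _) hp0

end padicNorm

theorem p_mul_harmonic_congr_fifth (p J : ℕ) (hp : p.Prime) (hp5 : 5 ≤ p)
    (hJ : 1 ≤ J) (hdvd : p ^ 2 ∣ J) :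
    5 ≤ padicValRat p ((p : ℚ) * H J - H (J / p)) := by
  have := Fact.mk hp
  set S := ∑ k ∈ (Icc 1 J).filter (¬ p ∣ ·), (k : ℚ)⁻¹
  have hsplit : (p : ℚ) * H J - H (J / p) = p * S := by
    rw [H_eq_harmonic, harmonic_eq_inv_mul_harmonic_div_add hp.pos
      ((dvd_pow_self p two_ne_zero).trans hdvd), mul_add,
      mul_inv_cancel_left₀ (by exact_mod_cast hp.ne_zero), add_sub_cancel_left]
  have hS : 0 < S := sum_pos' (fun k _ => by positivity) ⟨1, by simp [hJ, hp.one_lt.ne']⟩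
  rw [hsplit]
  refine padicNorm.le_padicValRat_of_le (by positivity) ?_
  rw [padicNorm.mul, padicNorm.padicNorm_p_of_prime]
  calc (p : ℚ)⁻¹ * padicNorm p S ≤ (p : ℚ)⁻¹ * (p : ℚ) ^ (-4 : ℤ) :=
        mul_le_mul_of_nonneg_left (padicNorm.sum_inv_filter_not_dvd_le hp5 hdvd) (by positivity)
    _ = (p : ℚ) ^ (-((5 : ℕ) : ℤ)) := by
        rw [← zpow_neg_one, ← zpow_add₀ (by exact_mod_cast hp.ne_zero)]
        norm_num
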